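/- Assume ℚ ⊆ k. Let H^p(R;Δ) be the set of p-tuples (δ^1,...,δ^p) of elements of R[[s]]_{Δ,+} such that δ^i_α = 0 whenever α_i = 0 and χ^j_R(δ^i) − χ^i_R(δ^j) = [δ^i, δ^j] for all i,j. Then the sum map Σ : H^p(R;Δ) → R[[s]]_{Δ,+}, (δ^i) ↦ Σ_{i=1}^p δ^i, is injective. -/

import Mathlib

def IsCoideal {p : ℕ} (Δ : Set (Fin p →₀ ℕ)) : Prop :=
  Δ.Nonempty ∧ ∀ α ∈ Δ, ∀ β ≤ α, β ∈ Δ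

def EqOnD {p : ℕ} {R : Type*} [Ring R] (Δ : Set (Fin p →₀ ℕ))
    (f g : MvPowerSeries (Fin p) R) : Prop :=
  ∀ α ∈ Δ, MvPowerSeries.coeff α f = MvPowerSeries.coeff α g

/-- The `i`-th partial Euler derivation `χ^i = s_i ∂/∂s_i`. -/
noncomputable def chi {p : ℕ} {R : Type*} [Ring R] (i : Fin p)
    (f : MvPowerSeries (Fin p) R) : MvPowerSeries (Fin p) R :=
  fun α => (α i) • MvPowerSeries.coeff α f

/-!
Summing the integrability conditions `χʲ(δⁱ) - χⁱ(δʲ) = [δⁱ, δʲ]` over `j` gives, with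
`σ = ∑ⱼ δʲ` and `|α| = ∑ⱼ αⱼ`,

  `|α| δⁱ_α = αᵢ σ_α + [δⁱ, σ]_α`.

Since `σ` has no constant term, `[δⁱ, σ]_α` only involves `δⁱ_β` for `β < α` and `σ_γ` for
`γ ≤ α`. Dividing by `|α|`, which is allowed over `ℚ`, the coefficients of every `δⁱ` are
determined recursively by `σ` and by the constant term `δⁱ_0 = 0`.
-/

open MvPowerSeries

lemma isUnit_natCast_of_algebra_rat (k : Type*) {R : Type*} [CommSemiring k] [Algebra ℚ k]
    [Semiring R] [Algebra k R] {n : ℕ} (hn : n ≠ 0) : IsUnit (n : R) := by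
  have hℚ : IsUnit (n : ℚ) := by simpa using hn
  simpa using (hℚ.map (algebraMap ℚ k)).map (algebraMap k R)

lemma coeff_chi {p : ℕ} {R : Type*} [Ring R] (i : Fin p) (α : Fin p →₀ ℕ)
    (f : MvPowerSeries (Fin p) R) : coeff α (chi i f) = α i • coeff α f :=
  rfl

lemma coeff_mul_congr {σ R : Type*} [Semiring R] {f g f' g' : MvPowerSeries σ R}
    {α : σ →₀ ℕ} (h : ∀ β γ, β + γ = α → coeff β f * coeff γ g = coeff β f' * coeff γ g') :
    coeff α (f * g) = coeff α (f' * g') := by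
  classical
  rw [coeff_mul, coeff_mul]
  exact Finset.sum_congr rfl fun x hx =>
    h x.1 x.2 (Finset.HasAntidiagonal.mem_antidiagonal.mp hx)

lemma coeff_commutator_congr {σ R : Type*} [Ring R] {f g f' g' : MvPowerSeries σ R}
    {α : σ →₀ ℕ} (hg0 : coeff 0 g = 0) (hf : ∀ β < α, coeff β f = coeff β f')
    (hg : ∀ β ≤ α, coeff β g = coeff β g') :
    coeff α (f * g - g * f) = coeff α (f' * g' - g' * f') := by
  have hterm : ∀ β γ, β + γ = α → (coeff γ g = 0 ∧ coeff γ g' = 0) ∨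
      (coeff β f = coeff β f' ∧ coeff γ g = coeff γ g') := by
    rintro β γ rfl
    rcases eq_or_ne γ 0 with rfl | hγ
    · exact .inl ⟨hg0, hg 0 zero_le ▸ hg0⟩
    · exact .inr ⟨hf β (lt_add_of_pos_right β (pos_iff_ne_zero.2 hγ)), hg γ le_add_self⟩
  have left : ∀ β γ, β + γ = α → coeff β f * coeff γ g = coeff β f' * coeff γ g' := by
    intro β γ h
    rcases hterm β γ h with ⟨h₁, h₂⟩ | ⟨h₁, h₂⟩ <;> simp [h₁, h₂]
  have right : ∀ γ β, γ + β = α → coeff γ g * coeff β f = coeff γ g' * coeff β f' := by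
    intro γ β h
    rcases hterm β γ (add_comm γ β ▸ h) with ⟨h₁, h₂⟩ | ⟨h₁, h₂⟩ <;> simp [h₁, h₂]
  rw [map_sub, map_sub, coeff_mul_congr left, coeff_mul_congr right]

lemma degree_smul_coeff_eq {p : ℕ} {R : Type*} [Ring R] (δ : Fin p → MvPowerSeries (Fin p) R)
    (i : Fin p) (α : Fin p →₀ ℕ)
    (h : ∀ j, coeff α (chi j (δ i) - chi i (δ j)) = coeff α (δ i * δ j - δ j * δ i)) :
    α.degree • coeff α (δ i) =
      α i • coeff α (∑ j, δ j) + coeff α (δ i * ∑ j, δ j - (∑ j, δ j) * δ i) := by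
  have hsummed := Finset.sum_congr rfl fun j (_ : j ∈ Finset.univ) => h j
  simp only [map_sub, coeff_chi, Finset.sum_sub_distrib, ← Finset.sum_smul,
    ← Finset.smul_sum] at hsummed
  rw [Finsupp.degree_eq_sum, map_sum, Finset.mul_sum, Finset.sum_mul, map_sub, map_sum, map_sum,
    ← hsummed]
  abel

theorem sum_injective_on_H_general {p : ℕ} {k R : Type*} [CommRing k] [Algebra ℚ k] [Ring R]
    [Algebra k R]
    (Δ : Set (Fin p →₀ ℕ)) (hΔ : IsCoideal Δ)
    (δ η : Fin p → MvPowerSeries (Fin p) R)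
    (hδ0 : ∀ i, MvPowerSeries.coeff 0 (δ i) = 0)
    (hη0 : ∀ i, MvPowerSeries.coeff 0 (η i) = 0)
    (hδb : ∀ i j, EqOnD Δ (chi j (δ i) - chi i (δ j)) (δ i * δ j - δ j * δ i))
    (hηb : ∀ i j, EqOnD Δ (chi j (η i) - chi i (η j)) (η i * η j - η j * η i))
    (hsum : EqOnD Δ (∑ i, δ i) (∑ i, η i)) :
    ∀ i, EqOnD Δ (δ i) (η i) := by
  suffices h : ∀ α ∈ Δ, ∀ i, coeff α (δ i) = coeff α (η i) from fun i α hα => h α hα i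
  have hσ0 : coeff 0 (∑ j, δ j) = 0 := by simp [hδ0]
  intro α
  induction α using WellFoundedLT.induction with
  | _ α ih =>
  intro hα i
  rcases eq_or_ne α 0 with rfl | hα0
  · rw [hδ0, hη0]
  have hdeg : α.degree ≠ 0 := α.degree_eq_zero_iff.not.2 hα0
  refine (isUnit_natCast_of_algebra_rat k hdeg).mul_left_cancel ?_
  rw [← nsmul_eq_mul, ← nsmul_eq_mul, degree_smul_coeff_eq δ i α (fun j => hδb i j α hα),
    degree_smul_coeff_eq η i α (fun j => hηb i j α hα), hsum α hα,
    coeff_commutator_congr hσ0 (fun β hβ => ih β hβ (hΔ.2 α hα β hβ.le) i)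
      (fun β hβ => hsum β (hΔ.2 α hα β hβ))]

/-- Assume `ℚ ⊆ k`. The sum map `Σ : H^p(R;Δ) → R[[s]]_{Δ,+}` is injective, where
`H^p(R;Δ)` consists of the tuples `(δ^1,…,δ^p)` of series with zero constant term such
that `δ^i_α = 0` whenever `α_i = 0` and `χ^j_R(δ^i) − χ^i_R(δ^j) = [δ^i,δ^j]`. -/
theorem sum_injective_on_H {p : ℕ} {k R : Type*} [CommRing k] [Algebra ℚ k] [Ring R]
    [Algebra k R]
    (Δ : Set (Fin p →₀ ℕ)) (hΔ : IsCoideal Δ)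
    (δ η : Fin p → MvPowerSeries (Fin p) R)
    (hδ0 : ∀ i, MvPowerSeries.coeff 0 (δ i) = 0)
    (hη0 : ∀ i, MvPowerSeries.coeff 0 (η i) = 0)
    (hδa : ∀ i, ∀ α ∈ Δ, α i = 0 → MvPowerSeries.coeff α (δ i) = 0)
    (hηa : ∀ i, ∀ α ∈ Δ, α i = 0 → MvPowerSeries.coeff α (η i) = 0)
    (hδb : ∀ i j, EqOnD Δ (chi j (δ i) - chi i (δ j)) (δ i * δ j - δ j * δ i))
    (hηb : ∀ i j, EqOnD Δ (chi j (η i) - chi i (η j)) (η i * η j - η j * η i))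
    (hsum : EqOnD Δ (∑ i, δ i) (∑ i, η i)) :
    ∀ i, EqOnD Δ (δ i) (η i) :=
  sum_injective_on_H_general (k := k) Δ hΔ δ η hδ0 hη0 hδb hηb hsum
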